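/- arXiv:1107.2105 — 3 statements merged into one kernel-verified Lean document; each statement's English description precedes it below -/
import Mathlib

section
/- (Intermediate claim in the proof of Lemma 3.) Let <J,I,v> be a critical instance of the Work Assignment Problem, let 0<ε<v, and let G' be the corresponding graph of <J,I,v−ε>. Then every minimum (s,t)-cut of G' has capacity strictly less than Σ_{i=1}^n w_i/(v−ε); consequently no minimum (s,t)-cut of G' contains all the edges (s,x_i), and for every maximum flow of G' at least one edge (s,x_i) is not saturated. -/
open Finset

/-- A feasible assignment for the WAP instance `⟨J, I, v⟩`: times `t i j ≥ 0`,
`t i j = 0` if job `i` is not alive in interval `j`, `t i j ≤ |I j|`,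
the capacity `m j * |I j|` of each interval is respected, and each job `i`
receives exactly `w i / v` units of processing time. -/
def WFeasAssign {n L : ℕ} (w : Fin n → ℝ) (len : Fin L → ℝ) (mj : Fin L → ℕ)
    (Alive : Fin n → Fin L → Bool) (v : ℝ) (t : Fin n → Fin L → ℝ) : Prop :=
  (∀ i j, 0 ≤ t i j) ∧
  (∀ i j, ¬ Alive i j → t i j = 0) ∧
  (∀ i j, t i j ≤ len j) ∧
  (∀ j, ∑ i ∈ univ.filter (fun i => Alive i j), t i j ≤ (mj j : ℝ) * len j) ∧
  (∀ i, ∑ j ∈ univ.filter (fun j => Alive i j), t i j = w i / v)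

/-- The WAP instance `⟨J, I, v⟩` is feasible if a feasible assignment exists. -/
def WFeasible {n L : ℕ} (w : Fin n → ℝ) (len : Fin L → ℝ) (mj : Fin L → ℕ)
    (Alive : Fin n → Fin L → Bool) (v : ℝ) : Prop :=
  ∃ t, WFeasAssign w len mj Alive v t

/-- Job `i` is critical for `⟨J, I, v⟩`: in every feasible assignment and every
interval `j` in which `i` is alive, either `t i j = |I j|` or the whole capacity
`m j * |I j|` of the interval is used. -/
def CriticalJob {n L : ℕ} (w : Fin n → ℝ) (len : Fin L → ℝ) (mj : Fin L → ℕ)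
    (Alive : Fin n → Fin L → Bool) (v : ℝ) (i : Fin n) : Prop :=
  ∀ t, WFeasAssign w len mj Alive v t → ∀ j, Alive i j →
    t i j = len j ∨ ∑ k ∈ univ.filter (fun k => Alive k j), t k j = (mj j : ℝ) * len j

/-- The instance `⟨J, I, v⟩` is critical: it is feasible, but `⟨J, I, v'⟩` is
infeasible for every speed `0 < v' < v`. -/
def CriticalInstance {n L : ℕ} (w : Fin n → ℝ) (len : Fin L → ℝ) (mj : Fin L → ℕ)
    (Alive : Fin n → Fin L → Bool) (v : ℝ) : Prop :=
  WFeasible w len mj Alive v ∧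
    ∀ v', 0 < v' → v' < v → ¬ WFeasible w len mj Alive v'

/-- `f` is a flow for capacities `c` with source `s` and sink `t`:
`0 ≤ f ≤ c` on every (ordered) pair of nodes, and flow is conserved at every
node other than `s` and `t`. -/
def IsFlow {V : Type*} [Fintype V] (c f : V → V → ℝ) (s t : V) : Prop :=
  (∀ u v, 0 ≤ f u v) ∧ (∀ u v, f u v ≤ c u v) ∧
  (∀ v, v ≠ s → v ≠ t → ∑ u, f u v = ∑ u, f v u)

/-- The value of a flow: the net flow leaving the source `s`. -/
def flowValue {V : Type*} [Fintype V] (f : V → V → ℝ) (s : V) : ℝ :=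
  (∑ u, f s u) - (∑ u, f u s)

/-- `f` is a maximum flow. -/
def IsMaxFlow {V : Type*} [Fintype V] (c f : V → V → ℝ) (s t : V) : Prop :=
  IsFlow c f s t ∧ ∀ g, IsFlow c g s t → flowValue g s ≤ flowValue f s

/-- An `(s,t)`-cut, identified with its source side `X`: `s ∈ X` and `t ∉ X`.
The edges of the cut are the pairs `(u, v)` with `u ∈ X` and `v ∉ X`. -/
def IsCut {V : Type*} (X : Finset V) (s t : V) : Prop := s ∈ X ∧ t ∉ X

/-- The capacity of the cut with source side `X`. -/
def cutCap {V : Type*} [Fintype V] [DecidableEq V] (c : V → V → ℝ) (X : Finset V) : ℝ :=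
  ∑ u ∈ X, ∑ v ∈ Xᶜ, c u v

/-- `X` is (the source side of) a minimum `(s,t)`-cut. -/
def IsMinCut {V : Type*} [Fintype V] [DecidableEq V] (c : V → V → ℝ) (X : Finset V)
    (s t : V) : Prop :=
  IsCut X s t ∧ ∀ Y : Finset V, IsCut Y s t → cutCap c X ≤ cutCap c Y

/-- The nodes of the corresponding graph of a WAP instance: a source `src`,
one node `x i` per job, one node `y j` per interval, and a sink `sink`. -/
inductive Node (n L : ℕ) where
  | src : Node n L
  | x : Fin n → Node n L
  | y : Fin L → Node n L
  | sink : Node n L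
  deriving DecidableEq, Fintype

/-- The capacities of the corresponding graph of the WAP instance `⟨J, I, v⟩`:
`cap src (x i) = w i / v`, `cap (x i) (y j) = |I j|` when `i` is alive in `j`,
`cap (y j) sink = m j * |I j|`, and `0` on all other (non-)edges. -/
noncomputable def cap {n L : ℕ} (w : Fin n → ℝ) (len : Fin L → ℝ) (mj : Fin L → ℕ)
    (Alive : Fin n → Fin L → Bool) (v : ℝ) : Node n L → Node n L → ℝ
  | .src, .x i => w i / v
  | .x i, .y j => if Alive i j then len j else 0
  | .y j, .sink => (mj j : ℝ) * len j
  | _, _ => 0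


/-! At speed `v - ε` the instance is infeasible, so no flow of `G'` saturates every source edge
`(s, x i)`: such a flow, restricted to the edges `(x i, y j)`, would be a feasible assignment.
By max-flow min-cut, every minimum cut has the capacity of a maximum flow, which is therefore
strictly below the total capacity `∑ i, w i / (v - ε)` of the source edges.

Max-flow min-cut is proved directly. A maximum flow exists by compactness. The nodes reachable
from `s` in its residual graph form a cut of capacity equal to its value: a residual `s`-`t` path
would be a sum of feasible directions of the convex box `0 ≤ f ≤ c`, hence itself one, and
moving along it would increase the value. -/

def IsFeasibleDir (𝕜 : Type*) {E : Type*} [LT 𝕜] [Zero 𝕜] [Add E] [SMul 𝕜 E] (s : Set E)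
    (x d : E) : Prop :=
  ∃ η : 𝕜, 0 < η ∧ x + η • d ∈ s

lemma Convex.isFeasibleDir_add {𝕜 E : Type*} [Field 𝕜] [LinearOrder 𝕜]
    [IsStrictOrderedRing 𝕜] [AddCommGroup E] [Module 𝕜 E] {s : Set E} (hs : Convex 𝕜 s)
    {x d₁ d₂ : E} (hx : x ∈ s) (h₁ : IsFeasibleDir 𝕜 s x d₁) (h₂ : IsFeasibleDir 𝕜 s x d₂) :
    IsFeasibleDir 𝕜 s x (d₁ + d₂) := by
  obtain ⟨η₁, hη₁, hx₁⟩ := h₁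
  obtain ⟨η₂, hη₂, hx₂⟩ := h₂
  set η := min η₁ η₂
  have hη : 0 < η := lt_min hη₁ hη₂
  have shrink : ∀ {η' : 𝕜} {d : E}, 0 < η' → η ≤ η' → x + η' • d ∈ s → x + η • d ∈ s := by
    intro η' d hη' hle hmem
    have := hs.add_smul_mem hx hmem ⟨div_nonneg hη.le hη'.le, (div_le_one hη').2 hle⟩
    rwa [smul_smul, div_mul_cancel₀ _ hη'.ne'] at this
  refine ⟨η / 2, half_pos hη, ?_⟩
  have hmid := hs (shrink hη₁ (min_le_left _ _) hx₁) (shrink hη₂ (min_le_right _ _) hx₂)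
    (half_pos one_pos).le (half_pos one_pos).le (add_halves 1)
  convert hmid using 1
  module

section Flow

variable {V : Type*}

lemma mem_Icc_iff_forall {c f : V → V → ℝ} :
    f ∈ Set.Icc 0 c ↔ ∀ a b, 0 ≤ f a b ∧ f a b ≤ c a b := by
  simp only [Set.mem_Icc, Pi.le_def, Pi.zero_apply, forall_and]

variable [Fintype V]

def netOutflow (f : V → V → ℝ) (v : V) : ℝ := ∑ u, f v u - ∑ u, f u v

lemma netOutflow_add (f g : V → V → ℝ) (v : V) :
    netOutflow (f + g) v = netOutflow f v + netOutflow g v := by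
  simp only [netOutflow, Pi.add_apply, Finset.sum_add_distrib]
  ring

lemma netOutflow_smul (a : ℝ) (f : V → V → ℝ) (v : V) :
    netOutflow (a • f) v = a * netOutflow f v := by
  simp only [netOutflow, Pi.smul_apply, smul_eq_mul, ← Finset.mul_sum]
  ring

lemma netOutflow_neg (f : V → V → ℝ) (v : V) : netOutflow (-f) v = -netOutflow f v := by
  simpa using netOutflow_smul (-1) f v

lemma flowValue_eq_netOutflow (f : V → V → ℝ) (s : V) : flowValue f s = netOutflow f s := rfl

lemma isFlow_iff {c f : V → V → ℝ} {s t : V} :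
    IsFlow c f s t ↔ f ∈ Set.Icc 0 c ∧ ∀ v, v ≠ s → v ≠ t → netOutflow f v = 0 := by
  simp only [IsFlow, Set.mem_Icc, Pi.le_def, Pi.zero_apply, netOutflow, sub_eq_zero, and_assoc]
  constructor <;> rintro ⟨hnonneg, hcap, hcons⟩ <;>
    exact ⟨hnonneg, hcap, fun v hs ht => (hcons v hs ht).symm⟩

lemma exists_isMaxFlow {c : V → V → ℝ} (hc : 0 ≤ c) (s t : V) : ∃ f, IsMaxFlow c f s t := by
  have hflows : {f | IsFlow c f s t}
      = Set.Icc 0 c ∩ ⋂ v, ⋂ (_ : v ≠ s), ⋂ (_ : v ≠ t), {f | netOutflow f v = 0} := by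
    ext f
    simp [isFlow_iff]
  have hcompact : IsCompact {f | IsFlow c f s t} := by
    rw [hflows]
    refine isCompact_Icc.inter_right (isClosed_iInter fun v => isClosed_iInter fun _ =>
      isClosed_iInter fun _ => isClosed_eq ?_ continuous_const)
    unfold netOutflow
    fun_prop
  have hzero : IsFlow c 0 s t := isFlow_iff.2 ⟨⟨le_rfl, hc⟩, fun v _ _ => by simp [netOutflow]⟩
  obtain ⟨f, hf, hmax⟩ := hcompact.exists_isMaxOn ⟨0, hzero⟩
    (by unfold flowValue; fun_prop : Continuous fun f : V → V → ℝ => flowValue f s).continuousOn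
  exact ⟨f, hf, fun g hg => hmax hg⟩

lemma IsFlow.flowValue_lt_of_lt {c f : V → V → ℝ} {s t u : V} (hf : IsFlow c f s t)
    (hu : f s u < c s u) : flowValue f s < ∑ v, c s v :=
  calc flowValue f s ≤ ∑ v, f s v :=
        sub_le_self _ (Finset.sum_nonneg fun v _ => hf.1 v s)
    _ < ∑ v, c s v := Finset.sum_lt_sum (fun v _ => hf.2.1 s v) ⟨u, Finset.mem_univ u, hu⟩

variable [DecidableEq V]

def unitFlow (a b : V) : V → V → ℝ := fun u v => if u = a ∧ v = b then 1 else 0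

lemma netOutflow_unitFlow (a b v : V) :
    netOutflow (unitFlow a b) v = (if v = a then 1 else 0) - (if v = b then 1 else 0) := by
  simp [netOutflow, unitFlow, ite_and]

def IsResidualEdge (c f : V → V → ℝ) (u w : V) : Prop := f u w < c u w ∨ 0 < f w u

lemma IsResidualEdge.exists_isFeasibleDir {c f : V → V → ℝ} (hf : f ∈ Set.Icc 0 c) {u w : V}
    (h : IsResidualEdge c f u w) :
    ∃ d, IsFeasibleDir ℝ (Set.Icc 0 c) f d ∧
      ∀ v, netOutflow d v = (if v = u then 1 else 0) - (if v = w then 1 else 0) := by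
  rw [mem_Icc_iff_forall] at hf
  rcases h with hlt | hpos
  · refine ⟨unitFlow u w, ⟨c u w - f u w, sub_pos.2 hlt, mem_Icc_iff_forall.2 fun a b => ?_⟩,
      netOutflow_unitFlow u w⟩
    simp only [Pi.add_apply, Pi.smul_apply, smul_eq_mul, unitFlow]
    split_ifs with hab
    · obtain ⟨rfl, rfl⟩ := hab
      constructor <;> linarith [hf a b]
    · simpa using hf a b
  · refine ⟨-unitFlow w u, ⟨f w u, hpos, mem_Icc_iff_forall.2 fun a b => ?_⟩, fun v => ?_⟩
    · simp only [Pi.add_apply, Pi.smul_apply, Pi.neg_apply, smul_eq_mul, unitFlow]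
      split_ifs with hab
      · obtain ⟨rfl, rfl⟩ := hab
        constructor <;> linarith [hf a b]
      · simpa using hf a b
    · rw [netOutflow_neg, netOutflow_unitFlow]
      ring

lemma exists_isFeasibleDir_of_reflTransGen {c f : V → V → ℝ} (hf : f ∈ Set.Icc 0 c) {s u : V}
    (h : Relation.ReflTransGen (IsResidualEdge c f) s u) :
    ∃ d, IsFeasibleDir ℝ (Set.Icc 0 c) f d ∧
      ∀ v, netOutflow d v = (if v = s then 1 else 0) - (if v = u then 1 else 0) := by
  induction h with
  | refl => exact ⟨0, ⟨1, one_pos, by simpa using hf⟩, fun v => by simp [netOutflow]⟩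
  | tail _ hedge ih =>
    obtain ⟨d, hd, hnet⟩ := ih
    obtain ⟨e, he, hnet'⟩ := hedge.exists_isFeasibleDir hf
    refine ⟨d + e, (convex_Icc 0 c).isFeasibleDir_add hf hd he, fun v => ?_⟩
    rw [netOutflow_add, hnet, hnet']
    ring

lemma IsMaxFlow.not_reflTransGen_isResidualEdge {c f : V → V → ℝ} {s t : V} (hf : IsMaxFlow c f s t)
    (hst : s ≠ t) : ¬ Relation.ReflTransGen (IsResidualEdge c f) s t := by
  intro h
  have hflow := isFlow_iff.1 hf.1
  obtain ⟨d, ⟨η, hη, hmem⟩, hnet⟩ := exists_isFeasibleDir_of_reflTransGen hflow.1 h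
  have hnet' : ∀ v, netOutflow (f + η • d) v
      = netOutflow f v + η * ((if v = s then 1 else 0) - (if v = t then 1 else 0)) := by
    intro v
    rw [netOutflow_add, netOutflow_smul, hnet]
  have hg : IsFlow c (f + η • d) s t :=
    isFlow_iff.2 ⟨hmem, fun v hvs hvt => by simp [hnet', hvs, hvt, hflow.2 v hvs hvt]⟩
  have := hf.2 _ hg
  rw [flowValue_eq_netOutflow, flowValue_eq_netOutflow, hnet', if_pos rfl, if_neg hst] at this
  linarith

lemma IsFlow.flowValue_eq_sum_cut {c f : V → V → ℝ} {s t : V} (hf : IsFlow c f s t)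
    {X : Finset V} (hX : IsCut X s t) :
    flowValue f s = ∑ u ∈ X, ∑ v ∈ Xᶜ, (f u v - f v u) := by
  have hcons := (isFlow_iff.1 hf).2
  have hinner : ∑ u ∈ X, ∑ v ∈ X, (f u v - f v u) = 0 := by
    simp only [Finset.sum_sub_distrib]
    exact sub_eq_zero.2 Finset.sum_comm
  calc flowValue f s = ∑ u ∈ X, netOutflow f u := by
        refine (Finset.sum_eq_single_of_mem s hX.1 fun u hu hus => ?_).symm
        exact hcons u hus (fun hut => hX.2 (hut ▸ hu))
    _ = ∑ u ∈ X, (∑ v ∈ X, (f u v - f v u) + ∑ v ∈ Xᶜ, (f u v - f v u)) := by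
        refine Finset.sum_congr rfl fun u _ => ?_
        rw [Finset.sum_add_sum_compl, netOutflow, Finset.sum_sub_distrib]
    _ = ∑ u ∈ X, ∑ v ∈ Xᶜ, (f u v - f v u) := by
        rw [Finset.sum_add_distrib, hinner, zero_add]

lemma IsFlow.flowValue_le_cutCap {c f : V → V → ℝ} {s t : V} (hf : IsFlow c f s t)
    {X : Finset V} (hX : IsCut X s t) : flowValue f s ≤ cutCap c X := by
  rw [hf.flowValue_eq_sum_cut hX, cutCap]
  gcongr with u _ v _
  linarith [hf.1 v u, hf.2.1 u v]

lemma IsMaxFlow.exists_isCut_cutCap_eq {c f : V → V → ℝ} {s t : V} (hf : IsMaxFlow c f s t)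
    (hst : s ≠ t) : ∃ X : Finset V, IsCut X s t ∧ cutCap c X = flowValue f s := by
  classical
  set X := Finset.univ.filter (Relation.ReflTransGen (IsResidualEdge c f) s)
  have hX : IsCut X s t := by
    simpa [X, IsCut, Relation.ReflTransGen.refl] using hf.not_reflTransGen_isResidualEdge hst
  refine ⟨X, hX, ?_⟩
  rw [hf.1.flowValue_eq_sum_cut hX, cutCap]
  refine Finset.sum_congr rfl fun u hu => Finset.sum_congr rfl fun v hv => ?_
  have hres : ¬ IsResidualEdge c f u v := fun huv =>
    Finset.mem_compl.1 hv (by simpa [X] using (Finset.mem_filter.1 hu).2.tail huv)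
  simp only [IsResidualEdge, not_or, not_lt] at hres
  linarith [hf.1.1 v u, hf.1.2.1 u v]

lemma IsMaxFlow.flowValue_eq_cutCap {c f : V → V → ℝ} {s t : V} {X : Finset V}
    (hf : IsMaxFlow c f s t) (hX : IsMinCut c X s t) : flowValue f s = cutCap c X := by
  obtain ⟨Y, hY, hcap⟩ := hf.exists_isCut_cutCap_eq fun hst => hX.1.2 (hst ▸ hX.1.1)
  exact le_antisymm (hf.1.flowValue_le_cutCap hX.1) (hcap ▸ hX.2 Y hY)

end Flow

section WorkAssignment

variable {n L : ℕ} {w : Fin n → ℝ} {len : Fin L → ℝ} {mj : Fin L → ℕ}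
  {Alive : Fin n → Fin L → Bool} {v : ℝ}

lemma cap_nonneg (hw : ∀ i, 0 ≤ w i) (hlen : ∀ j, 0 ≤ len j) (hv : 0 < v) :
    0 ≤ cap w len mj Alive v := by
  intro a b
  cases a <;> cases b <;> simp only [cap, Pi.zero_apply, le_refl]
  · exact div_nonneg (hw _) hv.le
  · split_ifs <;> simp [hlen]
  · exact mul_nonneg (Nat.cast_nonneg _) (hlen _)

lemma sum_cap_src : ∑ u, cap w len mj Alive v .src u = ∑ i, w i / v := by
  refine (Fintype.sum_of_injective Node.x (fun _ _ => Node.x.inj) _ _ ?_ fun _ => rfl).symm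
  rintro (_ | i | _ | _) hi
  exacts [rfl, absurd ⟨i, rfl⟩ hi, rfl, rfl]

lemma sum_cap_src_le_cutCap (hw : ∀ i, 0 ≤ w i) (hlen : ∀ j, 0 ≤ len j) (hv : 0 < v)
    {X : Finset (Node n L)} (hX : IsCut X .src .sink) (hx : ∀ i, Node.x i ∉ X) :
    ∑ i, w i / v ≤ cutCap (cap w len mj Alive v) X := by
  have hc := cap_nonneg (mj := mj) (Alive := Alive) hw hlen hv
  calc ∑ i, w i / v = ∑ u ∈ Xᶜ, cap w len mj Alive v .src u := by
        rw [← sum_cap_src]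
        refine (Finset.sum_subset (Finset.subset_univ _) fun u _ hu => ?_).symm
        cases u <;> first | rfl | exact absurd (Finset.mem_compl.2 (hx _)) hu
    _ ≤ cutCap (cap w len mj Alive v) X :=
        Finset.single_le_sum (f := fun u => ∑ z ∈ Xᶜ, cap w len mj Alive v u z)
          (fun u _ => Finset.sum_nonneg fun z _ => hc u z) hX.1

lemma wFeasible_of_isFlow (hlen : ∀ j, 0 ≤ len j) {f : Node n L → Node n L → ℝ}
    (hf : IsFlow (cap w len mj Alive v) f .src .sink) (hsat : ∀ i, f .src (.x i) = w i / v) :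
    WFeasible w len mj Alive v := by
  have hzero : ∀ a b, cap w len mj Alive v a b = 0 → f a b = 0 := fun a b h =>
    le_antisymm (h ▸ hf.2.1 a b) (hf.1 a b)
  have hdead : ∀ i j, ¬ Alive i j → f (.x i) (.y j) = 0 := fun i j hA =>
    hzero _ _ (by simp [cap, hA])
  have hjob : ∀ i, ∑ j, f (.x i) (.y j) = w i / v := fun i => by
    calc ∑ j, f (.x i) (.y j) = ∑ u, f (.x i) u := by
          refine Fintype.sum_of_injective Node.y (fun _ _ => Node.y.inj) _ _ ?_ fun _ => rfl
          rintro (_ | _ | j | _) hj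
          exacts [hzero _ _ rfl, hzero _ _ rfl, absurd ⟨j, rfl⟩ hj, hzero _ _ rfl]
      _ = ∑ u, f u (.x i) := (hf.2.2 (.x i) nofun nofun).symm
      _ = w i / v := by
          rw [Fintype.sum_eq_single .src, hsat]
          rintro (_ | _ | _ | _) hu
          exacts [absurd rfl hu, hzero _ _ rfl, hzero _ _ rfl, hzero _ _ rfl]
  have hinterval : ∀ j, ∑ i, f (.x i) (.y j) = f (.y j) .sink := fun j => by
    calc ∑ i, f (.x i) (.y j) = ∑ u, f u (.y j) := by
          refine Fintype.sum_of_injective Node.x (fun _ _ => Node.x.inj) _ _ ?_ fun _ => rfl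
          rintro (_ | i | _ | _) hi
          exacts [hzero _ _ rfl, absurd ⟨i, rfl⟩ hi, hzero _ _ rfl, hzero _ _ rfl]
      _ = ∑ u, f (.y j) u := hf.2.2 (.y j) nofun nofun
      _ = f (.y j) .sink := by
          refine Fintype.sum_eq_single Node.sink ?_
          rintro (_ | _ | _ | _) hu
          exacts [hzero _ _ rfl, hzero _ _ rfl, hzero _ _ rfl, absurd rfl hu]
  refine ⟨fun i j => f (.x i) (.y j), fun i j => hf.1 _ _, hdead, fun i j => ?_, fun j => ?_,
    fun i => ?_⟩
  · refine (hf.2.1 _ _).trans ?_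
    simp only [cap]
    split_ifs <;> simp [hlen]
  · rw [Finset.sum_filter_of_ne fun i _ h => by_contra fun hA => h (hdead i j hA),
      hinterval]
    exact hf.2.1 _ _
  · rw [Finset.sum_filter_of_ne fun j _ h => by_contra fun hA => h (hdead i j hA), hjob]

end WorkAssignment

theorem min_cut_of_shrunk_instance_general {n L : ℕ} (w : Fin n → ℝ) (len : Fin L → ℝ)
    (mj : Fin L → ℕ) (Alive : Fin n → Fin L → Bool) (v ε : ℝ)
    (hw : ∀ i, 0 < w i) (hlen : ∀ j, 0 < len j)
    (hε : 0 < ε) (hεv : ε < v)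
    (hcrit : CriticalInstance w len mj Alive v) :
    (∀ X : Finset (Node n L),
        IsMinCut (cap w len mj Alive (v - ε)) X Node.src Node.sink →
        cutCap (cap w len mj Alive (v - ε)) X < ∑ i, w i / (v - ε)) ∧
    (∀ X : Finset (Node n L),
        IsMinCut (cap w len mj Alive (v - ε)) X Node.src Node.sink →
        ∃ i : Fin n, Node.x i ∈ X) ∧
    (∀ f, IsMaxFlow (cap w len mj Alive (v - ε)) f Node.src Node.sink →
        ∃ i : Fin n, f Node.src (Node.x i) < w i / (v - ε)) := by
  have hv : 0 < v - ε := by linarith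
  have hw' : ∀ i, 0 ≤ w i := fun i => (hw i).le
  have hlen' : ∀ j, 0 ≤ len j := fun j => (hlen j).le
  have hunsat : ∀ f, IsMaxFlow (cap w len mj Alive (v - ε)) f .src .sink →
      ∃ i, f .src (.x i) < w i / (v - ε) := by
    intro f hf
    by_contra! hsat
    exact hcrit.2 (v - ε) hv (by linarith)
      (wFeasible_of_isFlow hlen' hf.1 fun i => (hf.1.2.1 _ _).antisymm (hsat i))
  have hmincut : ∀ X, IsMinCut (cap w len mj Alive (v - ε)) X .src .sink →
      cutCap (cap w len mj Alive (v - ε)) X < ∑ i, w i / (v - ε) := by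
    intro X hX
    obtain ⟨f, hf⟩ := exists_isMaxFlow (cap_nonneg hw' hlen' hv) .src .sink
    obtain ⟨i, hi⟩ := hunsat f hf
    rw [← hf.flowValue_eq_cutCap hX, ← sum_cap_src]
    exact hf.1.flowValue_lt_of_lt hi
  refine ⟨hmincut, fun X hX => ?_, hunsat⟩
  by_contra! hx
  exact (hmincut X hX).not_ge (sum_cap_src_le_cutCap hw' hlen' hv hX.1 hx)

/-- (Intermediate claim in the proof of Lemma 3.) Let `⟨J, I, v⟩` be a critical
WAP instance, `0 < ε < v`, and `G'` the corresponding graph of `⟨J, I, v - ε⟩`.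
Then every minimum `(s,t)`-cut of `G'` has capacity strictly less than
`∑ i, w i / (v - ε)`; consequently no minimum `(s,t)`-cut contains all the edges
`(s, x i)` (i.e. every minimum cut has some `x i` on its source side), and every
maximum flow leaves some edge `(s, x i)` unsaturated. -/
theorem min_cut_of_shrunk_instance {n L : ℕ} (w : Fin n → ℝ) (len : Fin L → ℝ)
    (mj : Fin L → ℕ) (Alive : Fin n → Fin L → Bool) (v ε : ℝ)
    (hw : ∀ i, 0 < w i) (hlen : ∀ j, 0 < len j) (hmj : ∀ j, 1 ≤ mj j)
    (hε : 0 < ε) (hεv : ε < v)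
    (hcrit : CriticalInstance w len mj Alive v) :
    (∀ X : Finset (Node n L),
        IsMinCut (cap w len mj Alive (v - ε)) X Node.src Node.sink →
        cutCap (cap w len mj Alive (v - ε)) X < ∑ i, w i / (v - ε)) ∧
    (∀ X : Finset (Node n L),
        IsMinCut (cap w len mj Alive (v - ε)) X Node.src Node.sink →
        ∃ i : Fin n, Node.x i ∈ X) ∧
    (∀ f, IsMaxFlow (cap w len mj Alive (v - ε)) f Node.src Node.sink →
        ∃ i : Fin n, f Node.src (Node.x i) < w i / (v - ε)) :=
  min_cut_of_shrunk_instance_general w len mj Alive v ε hw hlen hε hεv hcrit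
end

section
/- (Flow characterization of criticality.) Let <J,I,v> be a feasible WAP instance with corresponding graph G. A job i is critical for <J,I,v> if and only if for every maximum (s,t)-flow f of G and every interval j with i∈A(j), either the edge (x_i,y_j) is saturated (f(x_i,y_j)=|I_j|) or the edge (y_j,t) is saturated (f(y_j,t)=m_j·|I_j|). -/
open Finset

def nodeEquiv (n L : ℕ) : (Unit ⊕ Fin n ⊕ Fin L ⊕ Unit) ≃ Node n L where
  toFun := fun u => match u with
    | .inl _ => .src
    | .inr (.inl i) => .x i
    | .inr (.inr (.inl j)) => .y j
    | .inr (.inr (.inr _)) => .sink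
  invFun := fun u => match u with
    | .src => .inl ()
    | .x i => .inr (.inl i)
    | .y j => .inr (.inr (.inl j))
    | .sink => .inr (.inr (.inr ()))
  left_inv := by rintro (_|i|j|_) <;> rfl
  right_inv := by intro u; cases u <;> rfl

lemma sum_node {n L : ℕ} (g : Node n L → ℝ) :
    ∑ u, g u = g .src + (∑ i, g (.x i)) + (∑ j, g (.y j)) + g .sink := by
  rw [← (nodeEquiv n L).sum_comp g]
  simp [Fintype.sum_sum_type, nodeEquiv]
  ring

variable {n L : ℕ} {w : Fin n → ℝ} {len : Fin L → ℝ} {mj : Fin L → ℕ}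
  {Alive : Fin n → Fin L → Bool} {v : ℝ}

/-- sums over the alive filter equal sums over everything, when zero off-alive -/
lemma filter_sum_eq_col {t : Fin n → Fin L → ℝ} (hz : ∀ i j, ¬ Alive i j → t i j = 0)
    (j : Fin L) : ∑ k ∈ univ.filter (fun k => Alive k j), t k j = ∑ k, t k j := by
  apply Finset.sum_filter_of_ne
  intro k _ hk
  by_contra hA
  exact hk (hz k j hA)

lemma filter_sum_eq_row {t : Fin n → Fin L → ℝ} (hz : ∀ i j, ¬ Alive i j → t i j = 0)
    (i : Fin n) : ∑ j ∈ univ.filter (fun j => Alive i j), t i j = ∑ j, t i j := by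
  apply Finset.sum_filter_of_ne
  intro k _ hk
  by_contra hA
  exact hk (hz i k hA)

/-- the flow corresponding to a feasible assignment -/
noncomputable def flowOf (w : Fin n → ℝ) (v : ℝ) (t : Fin n → Fin L → ℝ) :
    Node n L → Node n L → ℝ
  | .src, .x i => w i / v
  | .x i, .y j => t i j
  | .y j, .sink => ∑ k, t k j
  | _, _ => 0

lemma flowOf_isFlow (hw : ∀ i, 0 ≤ w i / v) {t : Fin n → Fin L → ℝ}
    (ht : WFeasAssign w len mj Alive v t) :
    IsFlow (cap w len mj Alive v) (flowOf w v t) Node.src Node.sink := by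
  obtain ⟨h0, hzero, hlen, hcapj, hsum⟩ := ht
  refine ⟨?_, ?_, ?_⟩
  · intro u u'
    cases u <;> cases u' <;>
      simp [flowOf, h0, hw, Finset.sum_nonneg (fun k _ => h0 k _)]
  · intro u u'
    cases u <;> cases u' <;> simp [flowOf, cap]
    case x.y i j =>
      by_cases hA : Alive i j
      · simp [hA, hlen i j]
      · simp [hA, hzero i j hA]
    case y.sink j =>
      rw [← filter_sum_eq_col hzero j]
      exact hcapj j
  · intro u hus hut
    cases u with
    | src => exact absurd rfl hus
    | sink => exact absurd rfl hut
    | x i =>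
      rw [sum_node (fun u => flowOf w v t u (Node.x i)),
        sum_node (fun u => flowOf w v t (Node.x i) u)]
      simp [flowOf]
      rw [← filter_sum_eq_row hzero i]
      exact (hsum i).symm
    | y j =>
      rw [sum_node (fun u => flowOf w v t u (Node.y j)),
        sum_node (fun u => flowOf w v t (Node.y j) u)]
      simp [flowOf]

lemma flowOf_value {t : Fin n → Fin L → ℝ} :
    flowValue (flowOf w v t) (Node.src (n := n) (L := L)) = ∑ i, w i / v := by
  unfold flowValue
  rw [sum_node (fun u => flowOf w v t Node.src u),
    sum_node (fun u => flowOf w v t u Node.src)]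
  simp [flowOf]

lemma flow_value_le {f : Node n L → Node n L → ℝ}
    (hf : IsFlow (cap w len mj Alive v) f Node.src Node.sink) :
    flowValue f Node.src ≤ ∑ i, w i / v := by
  obtain ⟨h0, hc, _⟩ := hf
  have h1 : flowValue f Node.src ≤ ∑ u, f Node.src u := by
    unfold flowValue
    have : (0:ℝ) ≤ ∑ u, f u Node.src := Finset.sum_nonneg (fun u _ => h0 u _)
    linarith
  refine h1.trans ?_
  rw [sum_node (fun u => f Node.src u)]
  have h2 : ∀ u, f Node.src u ≤ cap w len mj Alive v Node.src u := fun u => hc _ u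
  have hs : ∑ i, f Node.src (Node.x i) ≤ ∑ i, w i / v :=
    Finset.sum_le_sum (fun i _ => hc Node.src (Node.x i))
  have hy : ∀ j : Fin L, f Node.src (Node.y j) ≤ 0 := fun j => hc Node.src (Node.y j)
  have hy' : ∑ j, f Node.src (Node.y j) ≤ 0 :=
    Finset.sum_nonpos (fun j _ => hy j)
  have h3 : f Node.src Node.src ≤ 0 := hc _ _
  have h4 : f Node.src Node.sink ≤ 0 := hc _ _
  linarith

/-- a max flow saturates every source edge and induces a feasible assignment -/
lemma maxflow_props {f : Node n L → Node n L → ℝ}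
    (hw : ∀ i, 0 ≤ w i / v) (hlen : ∀ j, 0 ≤ len j)
    (hfeas : ∃ t, WFeasAssign w len mj Alive v t)
    (hf : IsMaxFlow (cap w len mj Alive v) f Node.src Node.sink) :
    WFeasAssign w len mj Alive v (fun i j => f (Node.x i) (Node.y j)) ∧
    (∀ j, f (Node.y j) Node.sink = ∑ k, f (Node.x k) (Node.y j)) := by
  obtain ⟨⟨h0, hc, hcons⟩, hmax⟩ := hf
  obtain ⟨t, ht⟩ := hfeas
  have hz : ∀ u u', cap w len mj Alive v u u' = 0 → f u u' = 0 := by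
    intro u u' h
    exact le_antisymm (h ▸ hc u u') (h0 u u')
  -- value is exactly ∑ w i / v
  have hval : flowValue f Node.src = ∑ i, w i / v := by
    refine le_antisymm (flow_value_le ⟨h0, hc, hcons⟩) ?_
    have := hmax _ (flowOf_isFlow hw ht)
    rwa [flowOf_value] at this
  -- no flow into src
  have hinsrc : ∀ u, f u (Node.src (n := n) (L := L)) = 0 := by
    intro u; apply hz; cases u <;> rfl
  -- source edges saturated
  have hsrc : ∀ i, f Node.src (Node.x i) = w i / v := by
    have hsum : ∑ i, f Node.src (Node.x i) = ∑ i, w i / v := by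
      have h1 : flowValue f Node.src = ∑ u, f Node.src u := by
        unfold flowValue; simp [hinsrc]
      rw [h1, sum_node (fun u => f Node.src u)] at hval
      have e1 : f Node.src Node.src = 0 := hz _ _ rfl
      have e2 : f Node.src Node.sink = 0 := hz _ _ rfl
      have e3 : ∀ j : Fin L, f Node.src (Node.y j) = 0 := fun j => hz _ _ rfl
      simp [e1, e2, e3] at hval
      exact hval
    intro i
    have := (Finset.sum_eq_sum_iff_of_le
      (fun i (_ : i ∈ (univ : Finset (Fin n))) => hc Node.src (Node.x i))).mp ?_ i (mem_univ i)
    · exact this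
    · rw [hsum]; rfl
  -- conservation at x i
  have hx : ∀ i, ∑ j, f (Node.x i) (Node.y j) = w i / v := by
    intro i
    have := hcons (Node.x i) (by simp) (by simp)
    rw [sum_node (fun u => f u (Node.x i)), sum_node (fun u => f (Node.x i) u)] at this
    have e1 : ∀ k : Fin n, f (Node.x k) (Node.x i) = 0 := fun k => hz _ _ rfl
    have e2 : ∀ j : Fin L, f (Node.y j) (Node.x i) = 0 := fun j => hz _ _ rfl
    have e3 : f Node.sink (Node.x i) = 0 := hz _ _ rfl
    have e4 : f (Node.x i) Node.src = 0 := hz _ _ rfl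
    have e5 : ∀ k : Fin n, f (Node.x i) (Node.x k) = 0 := fun k => hz _ _ rfl
    have e6 : f (Node.x i) Node.sink = 0 := hz _ _ rfl
    simp [e1, e2, e3, e4, e5, e6, hsrc i] at this
    linarith [this]
  -- conservation at y j
  have hy : ∀ j, f (Node.y j) Node.sink = ∑ k, f (Node.x k) (Node.y j) := by
    intro j
    have := hcons (Node.y j) (by simp) (by simp)
    rw [sum_node (fun u => f u (Node.y j)), sum_node (fun u => f (Node.y j) u)] at this
    have e1 : f Node.src (Node.y j) = 0 := hz _ _ rfl
    have e2 : ∀ j' : Fin L, f (Node.y j') (Node.y j) = 0 := fun _ => hz _ _ rfl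
    have e3 : f Node.sink (Node.y j) = 0 := hz _ _ rfl
    have e4 : f (Node.y j) Node.src = 0 := hz _ _ rfl
    have e5 : ∀ k : Fin n, f (Node.y j) (Node.x k) = 0 := fun _ => hz _ _ rfl
    have e6 : ∀ j' : Fin L, f (Node.y j) (Node.y j') = 0 := fun _ => hz _ _ rfl
    simp [e1, e2, e3, e4, e5, e6] at this
    linarith [this]
  have hzero : ∀ i j, ¬ Alive i j → f (Node.x i) (Node.y j) = 0 := by
    intro i j hA
    apply hz
    simp [cap, hA]
  refine ⟨⟨fun i j => h0 _ _, hzero, ?_, ?_, ?_⟩, hy⟩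
  · intro i j
    show f (Node.x i) (Node.y j) ≤ len j
    by_cases hA : Alive i j
    · have := hc (Node.x i) (Node.y j)
      simpa [cap, hA] using this
    · rw [hzero i j hA]; exact hlen j
  · intro j
    rw [filter_sum_eq_col hzero j, ← hy j]
    simpa [cap] using hc (Node.y j) Node.sink
  · intro i
    rw [filter_sum_eq_row hzero i]
    exact hx i

/-- (Flow characterization of criticality.) Let `⟨J, I, v⟩` be a feasible WAP
instance with corresponding graph `G`. A job `i` is critical for `⟨J, I, v⟩` if
and only if for every maximum `(s,t)`-flow `f` of `G` and every interval `j` in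
which `i` is alive, either the edge `(x i, y j)` is saturated
(`f (x i) (y j) = |I j|`) or the edge `(y j, sink)` is saturated
(`f (y j) sink = m j * |I j|`). -/
theorem critical_iff_saturated_in_every_max_flow {n L : ℕ}
    (w : Fin n → ℝ) (len : Fin L → ℝ) (mj : Fin L → ℕ)
    (Alive : Fin n → Fin L → Bool) (v : ℝ)
    (hw : ∀ i, 0 < w i) (hlen : ∀ j, 0 < len j) (hmj : ∀ j, 1 ≤ mj j) (hv : 0 < v)
    (hfeas : WFeasible w len mj Alive v) (i : Fin n) :
    CriticalJob w len mj Alive v i ↔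
      ∀ f, IsMaxFlow (cap w len mj Alive v) f Node.src Node.sink →
        ∀ j : Fin L, Alive i j →
          f (Node.x i) (Node.y j) = len j ∨
          f (Node.y j) Node.sink = (mj j : ℝ) * len j := by
  have hw' : ∀ k, 0 ≤ w k / v := fun k => (div_pos (hw k) hv).le
  have hlen' : ∀ j, 0 ≤ len j := fun j => (hlen j).le
  constructor
  · intro hcrit f hf j hA
    obtain ⟨hta, hy⟩ := maxflow_props hw' hlen' hfeas hf
    rcases hcrit _ hta j hA with h | h
    · exact Or.inl h
    · right
      rw [hy j, ← filter_sum_eq_col hta.2.1 j]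
      exact h
  · intro hsat t ht j hA
    have hflow := flowOf_isFlow hw' ht
    have hmax : IsMaxFlow (cap w len mj Alive v) (flowOf w v t) Node.src Node.sink :=
      ⟨hflow, fun g hg => by rw [flowOf_value]; exact flow_value_le hg⟩
    rcases hsat _ hmax j hA with h | h
    · left; simpa [flowOf] using h
    · right
      rw [filter_sum_eq_col ht.2.1 j]
      simpa [flowOf] using h
end

section
/- (Upper bound used by BAL's binary search.) Let <J,I,v> be a WAP instance in which every job is alive in at least one interval. If v ≥ (Σ_{i∈A(j)} w_i)/|I_j| for every interval j, then the instance <J,I,v> is feasible; in particular, <J,I,v> is feasible for v = max{ max_j (Σ_{i∈A(j)} w_i)/|I_j| , max_i den_i }, where den_i = w_i / Σ_{j:i∈A(j)} |I_j|. -/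
/-!
Distribute each job over its alive intervals in proportion to their lengths:
`t i j = (w i / v) * |I j| / Σ_{j' : i ∈ A j'} |I j'|`. Each job then receives exactly `w i / v`,
and since `w i ≤ Σ_{k ∈ A j} w k ≤ v |I j|`, every share is at most `w i / v ≤ |I j|` and
an interval receives at most `Σ_{k ∈ A j} w k / v ≤ |I j| ≤ m j |I j|` in total.
-/

open Finset

section ProportionalAssignment

variable {n L : ℕ} (w : Fin n → ℝ) (len : Fin L → ℝ) (Alive : Fin n → Fin L → Bool)

def aliveLength (i : Fin n) : ℝ :=
  ∑ j ∈ univ.filter (fun j => Alive i j), len j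

def intervalLoad (j : Fin L) : ℝ :=
  ∑ i ∈ univ.filter (fun i => Alive i j), w i

noncomputable def proportionalAssign (v : ℝ) (i : Fin n) (j : Fin L) : ℝ :=
  if Alive i j then w i / v * (len j / aliveLength len Alive i) else 0

variable {w len Alive}

lemma aliveLength_nonneg (hlen : ∀ j, 0 ≤ len j) (i : Fin n) : 0 ≤ aliveLength len Alive i :=
  sum_nonneg fun j _ => hlen j

lemma aliveLength_pos (hlen : ∀ j, 0 < len j) {i : Fin n} (hi : ∃ j, Alive i j) :
    0 < aliveLength len Alive i := by
  obtain ⟨j, hij⟩ := hi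
  exact sum_pos (fun j _ => hlen j) ⟨j, by simp [hij]⟩

lemma le_aliveLength (hlen : ∀ j, 0 ≤ len j) {i : Fin n} {j : Fin L} (hij : Alive i j) :
    len j ≤ aliveLength len Alive i :=
  single_le_sum (fun j _ => hlen j) (by simp [hij])

lemma le_intervalLoad (hw : ∀ i, 0 ≤ w i) {i : Fin n} {j : Fin L} (hij : Alive i j) :
    w i ≤ intervalLoad w Alive j :=
  single_le_sum (fun i _ => hw i) (by simp [hij])

lemma proportionalAssign_nonneg (hw : ∀ i, 0 ≤ w i) (hlen : ∀ j, 0 ≤ len j) {v : ℝ}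
    (hv : 0 ≤ v) (i : Fin n) (j : Fin L) : 0 ≤ proportionalAssign w len Alive v i j := by
  unfold proportionalAssign
  split_ifs
  · exact mul_nonneg (div_nonneg (hw i) hv) (div_nonneg (hlen j) (aliveLength_nonneg hlen i))
  · exact le_rfl

lemma proportionalAssign_le_div (hw : ∀ i, 0 ≤ w i) (hlen : ∀ j, 0 ≤ len j) {v : ℝ}
    (hv : 0 ≤ v) (i : Fin n) (j : Fin L) :
    proportionalAssign w len Alive v i j ≤ w i / v := by
  unfold proportionalAssign
  split_ifs with hij
  · exact mul_le_of_le_one_right (div_nonneg (hw i) hv)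
      (div_le_one_of_le₀ (le_aliveLength hlen hij) (aliveLength_nonneg hlen i))
  · exact div_nonneg (hw i) hv

lemma sum_proportionalAssign {i : Fin n} (hi : aliveLength len Alive i ≠ 0) (v : ℝ) :
    ∑ j ∈ univ.filter (fun j => Alive i j), proportionalAssign w len Alive v i j = w i / v := by
  calc ∑ j ∈ univ.filter (fun j => Alive i j), proportionalAssign w len Alive v i j
      = ∑ j ∈ univ.filter (fun j => Alive i j), w i / v / aliveLength len Alive i * len j :=
        sum_congr rfl fun j hj => by
          rw [proportionalAssign, if_pos (mem_filter.mp hj).2]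
          ring
    _ = w i / v / aliveLength len Alive i * aliveLength len Alive i := (mul_sum _ _ _).symm
    _ = w i / v := div_mul_cancel₀ _ hi

lemma intervalLoad_div_le_len (hlen : ∀ j, 0 < len j) {v : ℝ} (hv : 0 < v)
    (hload : ∀ j, intervalLoad w Alive j / len j ≤ v) (j : Fin L) :
    intervalLoad w Alive j / v ≤ len j := by
  rw [div_le_iff₀ hv, mul_comm]
  exact (div_le_iff₀ (hlen j)).mp (hload j)

lemma div_le_len_of_alive (hw : ∀ i, 0 ≤ w i) (hlen : ∀ j, 0 < len j) {v : ℝ} (hv : 0 < v)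
    (hload : ∀ j, intervalLoad w Alive j / len j ≤ v) {i : Fin n} {j : Fin L}
    (hij : Alive i j) : w i / v ≤ len j :=
  (div_le_div_of_nonneg_right (le_intervalLoad hw hij) hv.le).trans
    (intervalLoad_div_le_len hlen hv hload j)

theorem wFeasAssign_proportionalAssign (mj : Fin L → ℕ) (hw : ∀ i, 0 ≤ w i)
    (hlen : ∀ j, 0 < len j) (hmj : ∀ j, 1 ≤ mj j) (halive : ∀ i, ∃ j, Alive i j) {v : ℝ}
    (hv : 0 < v) (hload : ∀ j, intervalLoad w Alive j / len j ≤ v) :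
    WFeasAssign w len mj Alive v (proportionalAssign w len Alive v) := by
  have hlen' : ∀ j, 0 ≤ len j := fun j => (hlen j).le
  refine ⟨proportionalAssign_nonneg hw hlen' hv.le, fun i j hij => if_neg hij, fun i j => ?_,
    fun j => ?_, fun i => sum_proportionalAssign (aliveLength_pos hlen (halive i)).ne' v⟩
  · by_cases hij : Alive i j
    · exact (proportionalAssign_le_div hw hlen' hv.le i j).trans
        (div_le_len_of_alive hw hlen hv hload hij)
    · rw [proportionalAssign, if_neg hij]
      exact hlen' j
  · calc ∑ i ∈ univ.filter (fun i => Alive i j), proportionalAssign w len Alive v i j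
        ≤ ∑ i ∈ univ.filter (fun i => Alive i j), w i / v :=
          sum_le_sum fun i _ => proportionalAssign_le_div hw hlen' hv.le i j
      _ = intervalLoad w Alive j / v := (sum_div _ _ _).symm
      _ ≤ len j := intervalLoad_div_le_len hlen hv hload j
      _ ≤ mj j * len j := le_mul_of_one_le_left (hlen' j) (by exact_mod_cast hmj j)

theorem wFeasible_of_intervalLoad_div_le (mj : Fin L → ℕ) (hw : ∀ i, 0 ≤ w i)
    (hlen : ∀ j, 0 < len j) (hmj : ∀ j, 1 ≤ mj j) (halive : ∀ i, ∃ j, Alive i j) {v : ℝ}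
    (hv : 0 < v) (hload : ∀ j, intervalLoad w Alive j / len j ≤ v) :
    WFeasible w len mj Alive v :=
  ⟨_, wFeasAssign_proportionalAssign mj hw hlen hmj halive hv hload⟩

end ProportionalAssignment

/-- (Upper bound used by BAL's binary search.) In a WAP instance in which every
job is alive in at least one interval: if `v > 0` satisfies
`v ≥ (∑_{i ∈ A j} w i) / |I j|` for every interval `j`, then `⟨J, I, v⟩` is
feasible; in particular, `⟨J, I, v⟩` is feasible for
`v = max (max_j (∑_{i ∈ A j} w i) / |I j|) (max_i den i)`, where
`den i = w i / ∑_{j : i ∈ A j} |I j|`. -/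
theorem wap_feasible_upper_bound {n L : ℕ} (w : Fin n → ℝ) (len : Fin L → ℝ)
    (mj : Fin L → ℕ) (Alive : Fin n → Fin L → Bool)
    (hw : ∀ i, 0 < w i) (hlen : ∀ j, 0 < len j) (hmj : ∀ j, 1 ≤ mj j)
    (hn : 0 < n) (hL : 0 < L)
    (halive : ∀ i, ∃ j, Alive i j) :
    (∀ v : ℝ, 0 < v →
      (∀ j, (∑ i ∈ univ.filter (fun i => Alive i j), w i) / len j ≤ v) →
      WFeasible w len mj Alive v) ∧
    WFeasible w len mj Alive
      (max
        ((univ : Finset (Fin L)).sup' ⟨⟨0, hL⟩, mem_univ _⟩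
          (fun j => (∑ i ∈ univ.filter (fun i => Alive i j), w i) / len j))
        ((univ : Finset (Fin n)).sup' ⟨⟨0, hn⟩, mem_univ _⟩
          (fun i => w i / ∑ j ∈ univ.filter (fun j => Alive i j), len j))) := by
  have feasible := fun v => wFeasible_of_intervalLoad_div_le (v := v) mj (fun i => (hw i).le)
    hlen hmj halive
  refine ⟨feasible, feasible _ ?_ fun j =>
    le_max_of_le_left (le_sup' (fun j => intervalLoad w Alive j / len j) (mem_univ j))⟩
  have hden : 0 < w ⟨0, hn⟩ / aliveLength len Alive ⟨0, hn⟩ :=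
    div_pos (hw _) (aliveLength_pos hlen (halive _))
  exact lt_max_of_lt_right
    (hden.trans_le (le_sup' (fun i => w i / aliveLength len Alive i) (mem_univ _)))
end
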